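/- The polynomial λ₄₀(g,h) = (g² − h² − 1)·(9g⁴ − 17g²h² + 8h⁴ − 12g³ + 12gh² + 7g² − 8h² + 10g + 2) vanishes to order at least 2 (i.e., λ₄₀ and both its partial derivatives vanish) at every point (g,h) ∈ ℝ² satisfying g = 8 and 2h² = 125. -/

import Mathlib

/-!
Both partial derivatives come from exhibiting a squared factor: on the line `g = 8` the quartic
factor of `λ₄₀` is `2 (2h² - 125)²`, and on each line `2h² = 125` it is
`(g - 8)² (9g² + 132g + 961/2)`. A function `u² v` with `u(a) = 0` has zero derivative at `a`.
-/

/-- The Elkies–Kumar branch polynomial for discriminant 40. -/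
noncomputable def lam40 (g h : ℝ) : ℝ :=
  (g ^ 2 - h ^ 2 - 1) *
    (9 * g ^ 4 - 17 * g ^ 2 * h ^ 2 + 8 * h ^ 4 - 12 * g ^ 3 + 12 * g * h ^ 2
      + 7 * g ^ 2 - 8 * h ^ 2 + 10 * g + 2)

theorem deriv_sq_mul_eq_zero {𝕜 : Type*} [NontriviallyNormedField 𝕜] {u v : 𝕜 → 𝕜} {a : 𝕜}
    (hu : DifferentiableAt 𝕜 u a) (hv : DifferentiableAt 𝕜 v a) (hua : u a = 0) :
    deriv (fun x => u x ^ 2 * v x) a = 0 := by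
  have hd := (hu.hasDerivAt.fun_pow 2).fun_mul hv.hasDerivAt
  simpa [hua] using hd.deriv

theorem lam40_eight (y : ℝ) : lam40 8 y = (2 * y ^ 2 - 125) ^ 2 * (2 * (63 - y ^ 2)) := by
  unfold lam40
  ring

theorem lam40_of_two_mul_sq {h : ℝ} (hh : 2 * h ^ 2 = 125) (x : ℝ) :
    lam40 x h = (x - 8) ^ 2 * ((x ^ 2 - h ^ 2 - 1) * (9 * x ^ 2 + 132 * x + 961 / 2)) := by
  have hsq : h ^ 2 = 125 / 2 := by linarith
  unfold lam40
  rw [show h ^ 4 = (h ^ 2) ^ 2 by ring, hsq]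
  ring

/-- `λ₄₀` vanishes to order at least 2 (it and both partial derivatives vanish) at every
point `(g,h)` with `g = 8` and `2h² = 125`. -/
theorem stmt_8 (g h : ℝ) (hg : g = 8) (hh : 2 * h ^ 2 = 125) :
    lam40 g h = 0 ∧ deriv (fun x => lam40 x h) g = 0 ∧ deriv (fun y => lam40 g y) h = 0 := by
  subst hg
  refine ⟨by rw [lam40_eight, hh]; ring, ?_, ?_⟩
  · rw [funext (lam40_of_two_mul_sq hh)]
    exact deriv_sq_mul_eq_zero (by fun_prop) (by fun_prop) (sub_self 8)
  · rw [funext lam40_eight]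
    exact deriv_sq_mul_eq_zero (by fun_prop) (by fun_prop) (by rw [hh]; ring)
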